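/- Consistency characterization for periodic patterns: let p have period q, and suppose p matches text t at positions k and l with k < l ≤ k + m/2. Then p matches t at every position k + rq for integers r ≥ 0 with k + rq ≤ l. -/

import Mathlib

/-!
The shift `d = l - k` between the two occurrences is a period of `p`, and `q + d ≤ m`, so by the
Fine–Wilf periodicity lemma `gcd q d` is a period as well; minimality of `q` forces `q ∣ d`. Every
position of a window at `k + r q ≤ l` then lies in the occurrence at `k` or in the one at `l`, at
an offset congruent modulo `q` to its offset in the window.
-/

def Matches {α : Type*} {m : ℕ} (p : Fin m → α) (t : ℕ → α) (i : ℕ) : Prop :=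
  ∀ j : Fin m, t (i + (j : ℕ)) = p j

namespace List

theorem HasPeriod.dvd_of_forall_not_hasPeriod {α : Type*} {w : List α} {q d : ℕ}
    (hq : w.HasPeriod q) (hd : w.HasPeriod d) (hq0 : 0 < q)
    (hmin : ∀ e, 0 < e → e < q → ¬ w.HasPeriod e) (hlen : q + d - q.gcd d ≤ w.length) :
    q ∣ d := by
  have hgcd : w.HasPeriod (q.gcd d) := hq.gcd hd hlen
  rcases (Nat.gcd_le_left d hq0).lt_or_eq with hlt | heq
  · exact absurd hgcd (hmin _ (Nat.gcd_pos_of_pos_left d hq0) hlt)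
  · exact heq ▸ Nat.gcd_dvd_right q d

end List

section

variable {α : Type*} {m : ℕ} {p : Fin m → α}

theorem List.hasPeriod_ofFn_iff {d : ℕ} :
    (List.ofFn p).HasPeriod d ↔ ∀ i (hi : i < m) (hdi : d ≤ i), p ⟨i, hi⟩ = p ⟨i - d, by omega⟩ := by
  rw [List.hasPeriod_iff_getElem?]
  simp only [List.length_ofFn, List.getElem?_ofFn]
  constructor
  · intro h i hi hdi
    have := h (i - d) (by omega)
    rw [dif_pos (by omega), dif_pos (by omega)] at this
    simp only [Option.some.injEq] at this
    rw [this]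
    congr 2
    omega
  · intro h i hi
    rw [dif_pos (by omega), dif_pos (by omega), h (i + d) (by omega) (by omega)]
    simp

theorem List.HasPeriod.apply_eq_of_modEq {q : ℕ} (hq : (List.ofFn p).HasPeriod q) {i j : Fin m}
    (h : (i : ℕ) ≡ j [MOD q]) : p i = p j := by
  have key : ∀ i : Fin m, p i = p ⟨i % q, (Nat.mod_le _ _).trans_lt i.2⟩ := by
    intro i
    have := List.hasPeriod_iff_forall_getElem?_mod.1 hq i (by simp)
    simpa [List.getElem?_ofFn, (Nat.mod_le _ _).trans_lt i.2] using this
  rw [key i, key j]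
  congr 2

variable {t : ℕ → α} {k l q : ℕ}

theorem Matches.hasPeriod_ofFn {d : ℕ} (hk : Matches p t k) (hd : Matches p t (k + d)) :
    (List.ofFn p).HasPeriod d :=
  List.hasPeriod_ofFn_iff.2 fun i hi hdi =>
    calc p ⟨i, hi⟩ = t (k + i) := (hk ⟨i, hi⟩).symm
      _ = t (k + d + (i - d)) := by congr 1; omega
      _ = p ⟨i - d, _⟩ := hd ⟨i - d, by omega⟩

theorem Matches.apply_eq_of_modEq (hq : (List.ofFn p).HasPeriod q) (hk : Matches p t k)
    {x : ℕ} (hkx : k ≤ x) (hxm : x < k + m) (j : Fin m) (h : x ≡ k + j [MOD q]) : t x = p j := by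
  obtain ⟨y, rfl⟩ : ∃ y, x = k + y := ⟨x - k, by omega⟩
  exact (hk ⟨y, by omega⟩).trans (hq.apply_eq_of_modEq (Nat.ModEq.add_left_cancel' k h))

theorem Matches.of_modEq (hq : (List.ofFn p).HasPeriod q) (hk : Matches p t k)
    (hl : Matches p t l) (hlk : l ≤ k + m) {i : ℕ} (hki : k ≤ i) (hil : i ≤ l)
    (hik_mod : i ≡ k [MOD q]) (hil_mod : i ≡ l [MOD q]) : Matches p t i := by
  intro j
  by_cases hj : i + j < k + m
  · exact hk.apply_eq_of_modEq hq (by omega) hj j (hik_mod.add_right j)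
  · exact hl.apply_eq_of_modEq hq (by omega) (by omega) j (hil_mod.add_right j)

end

/-- Consistency of a periodic pattern between two nearby occurrences: if `p` has
least period `q ≤ m/2` and matches the text at positions `k` and `l` with
`k < l ≤ k + m/2`, then `p` matches at every position `k + r·q ≤ l`. -/
theorem periodic_intermediate_occurrences {α : Type*} {m : ℕ} (p : Fin m → α)
    (q : ℕ) (hq1 : 1 ≤ q) (hq2 : q ≤ m / 2)
    (hper : ∀ i, ∀ hi : i < m, q ≤ i → ∀ h : i - q < m, p ⟨i, hi⟩ = p ⟨i - q, h⟩)
    (hleast : ∀ d, 1 ≤ d → d < q →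
      ∃ i, ∃ hi : i < m, d ≤ i ∧ p ⟨i, hi⟩ ≠ p ⟨i - d, by omega⟩)
    (t : ℕ → α) (k l : ℕ) (hk : Matches p t k) (hl : Matches p t l)
    (hclose : l ≤ k + m / 2) :
    ∀ r : ℕ, k + r * q ≤ l → Matches p t (k + r * q) := by
  intro r hr
  have hq : (List.ofFn p).HasPeriod q := List.hasPeriod_ofFn_iff.2 fun i hi h => hper i hi h _
  have hmin : ∀ e, 0 < e → e < q → ¬ (List.ofFn p).HasPeriod e := fun e he heq hpe => by
    obtain ⟨i, hi, hei, hne⟩ := hleast e he heq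
    exact hne (List.hasPeriod_ofFn_iff.1 hpe i hi hei)
  obtain ⟨d, rfl⟩ : ∃ d, l = k + d := ⟨l - k, by omega⟩
  obtain ⟨s, rfl⟩ : q ∣ d :=
    hq.dvd_of_forall_not_hasPeriod (hk.hasPeriod_ofFn hl) hq1 hmin
      ((Nat.sub_le _ _).trans (by simp only [List.length_ofFn]; omega))
  exact hk.of_modEq hq hl (by omega) (by omega) hr
    (by simp [Nat.ModEq]) (by simp [Nat.ModEq])
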